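/- Let L be a bounded lattice, Y = D̄♭(L) = (SPH(L,2_B), E), and let φ be a partial map from SPH(L,2_B) to {0,1}. Then φ is a maximal partial E-preserving map (an element of MPE(Y,2)) if and only if φ⁻¹(1) = ℓ(φ⁻¹(0)) and φ⁻¹(0) = r(φ⁻¹(1)). -/

import Mathlib

namespace CanExt

open Classical

/-- A partial map from `X` into the two-element chain `{0,1}` (encoded as `Bool`,
with `false` playing the role of `0` and `true` the role of `1`);
`φ x = none` means `x` is outside the domain of `φ`. -/
abbrev PMap (X : Type*) := X → Option Bool

/-- The preimage of `1` of a partial map. -/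
def pre1 {X : Type*} (φ : PMap X) : Set X := {x | φ x = some true}

/-- The preimage of `0` of a partial map. -/
def pre0 {X : Type*} (φ : PMap X) : Set X := {x | φ x = some false}

/-- A partial map is `E`-preserving if whenever `x, y` lie in its domain and
`(x,y) ∈ E`, then `φ x ≤ φ y`. -/
def EPres {X : Type*} (E : X → X → Prop) (φ : PMap X) : Prop :=
  ∀ ⦃x y : X⦄, E x y → ∀ ⦃a b : Bool⦄, φ x = some a → φ y = some b → a ≤ b

/-- `PExt ψ φ` : the partial map `ψ` extends the partial map `φ`. -/
def PExt {X : Type*} (ψ φ : PMap X) : Prop :=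
  ∀ ⦃x : X⦄ ⦃a : Bool⦄, φ x = some a → ψ x = some a

/-- The set of maximal partial `E`-preserving maps from `(X,E)` into the
two-element chain `2`. -/
def MPE {X : Type*} (E : X → X → Prop) : Set (PMap X) :=
  {φ | EPres E φ ∧ ∀ ψ : PMap X, EPres E ψ → PExt ψ φ → ψ = φ}

/-- A partial morphism from a graph with topology `(X,E,t)` to `2_τ`:
the preimages of `1` and `0` are `t`-closed (equivalently, the domain is
closed and the restriction to the domain is continuous into discrete `2`),
and the map is `E`-preserving. -/
def PMorphT {X : Type*} (E : X → X → Prop) (t : TopologicalSpace X) (φ : PMap X) : Prop :=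
  EPres E φ ∧ @IsClosed X t (pre1 φ) ∧ @IsClosed X t (pre0 φ)

/-- The set of maximal partial morphisms from `(X,E,t)` to `2_τ`. -/
def MPM {X : Type*} (E : X → X → Prop) (t : TopologicalSpace X) : Set (PMap X) :=
  {φ | PMorphT E t φ ∧ ∀ ψ : PMap X, PMorphT E t ψ → PExt ψ φ → ψ = φ}

/-- The relation `E` between partial maps on a lattice `L`:
`(f,g) ∈ E` iff `f x ≤ g x` for all `x ∈ dom f ∩ dom g`. -/
def ErelP {L : Type*} (f g : PMap L) : Prop :=
  ∀ ⦃x : L⦄ ⦃a b : Bool⦄, f x = some a → g x = some b → a ≤ b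

/-- `f ≤₁ g` iff `f⁻¹(1) ⊆ g⁻¹(1)`. -/
def le1 {L : Type*} (f g : PMap L) : Prop := pre1 f ⊆ pre1 g

/-- `f ≤₂ g` iff `f⁻¹(0) ⊆ g⁻¹(0)`. -/
def le2 {L : Type*} (f g : PMap L) : Prop := pre0 f ⊆ pre0 g

section Lat

variable (L : Type*) [Lattice L] [BoundedOrder L]

/-- A partial homomorphism from a bounded lattice `L` to the two-element
bounded lattice `2_B`: its domain is a `{0,1}`-sublattice of `L` and the
restriction to the domain is a bounded-lattice homomorphism. -/
def PHom (f : PMap L) : Prop :=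
  f ⊥ = some false ∧ f ⊤ = some true ∧
  ∀ ⦃a b : L⦄ ⦃x y : Bool⦄, f a = some x → f b = some y →
    f (a ⊓ b) = some (x ⊓ y) ∧ f (a ⊔ b) = some (x ⊔ y)

/-- The set of maximal partial homomorphisms (MPHs) from `L` to `2_B`. -/
def MPHset : Set (PMap L) := {f | PHom L f ∧ ∀ g : PMap L, PHom L g → PExt g f → g = f}

/-- The underlying set of the graph `D♭(L)`. -/
abbrev MPHsub := {f : PMap L // f ∈ MPHset L}

/-- The relation `E` on `MPH(L, 2_B)`, giving the graph `D♭(L)`. -/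
def EM (f g : MPHsub L) : Prop := ErelP f.1 g.1

/-- The evaluation map `e_a` on `MPH(L,2_B)` : `e_a(f) = f(a)` if `a ∈ dom f`. -/
def evalM (a : L) : PMap (MPHsub L) := fun f => f.1 a

/-- `V_a = {f ∈ MPH(L,2_B) : f(a) = 0}`. -/
def VaM (a : L) : Set (MPHsub L) := {f | f.1 a = some false}

/-- `W_a = {f ∈ MPH(L,2_B) : f(a) = 1}`. -/
def WaM (a : L) : Set (MPHsub L) := {f | f.1 a = some true}

/-- The topology on `MPH(L,2_B)` with the sets `V_a`, `W_a` as a subbasis of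
closed sets. -/
def tauM : TopologicalSpace (MPHsub L) :=
  TopologicalSpace.generateFrom {U | ∃ a : L, U = (VaM L a)ᶜ ∨ U = (WaM L a)ᶜ}

/-- A (nonempty) lattice filter. -/
def IsLatFilter (F : Set L) : Prop :=
  F.Nonempty ∧ (∀ ⦃a b : L⦄, a ∈ F → a ≤ b → b ∈ F) ∧
    (∀ ⦃a b : L⦄, a ∈ F → b ∈ F → a ⊓ b ∈ F)

/-- A (nonempty) lattice ideal. -/
def IsLatIdeal (I : Set L) : Prop :=
  I.Nonempty ∧ (∀ ⦃a b : L⦄, a ∈ I → b ≤ a → b ∈ I) ∧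
    (∀ ⦃a b : L⦄, a ∈ I → b ∈ I → a ⊔ b ∈ I)

/-- The set of special partial homomorphisms (SPHs) from `L` to `2_B`:
`f⁻¹(1)` is a nonempty filter, `f⁻¹(0)` is a nonempty ideal, and they are
disjoint. -/
def SPHset : Set (PMap L) :=
  {f | IsLatFilter L (pre1 f) ∧ IsLatIdeal L (pre0 f) ∧ Disjoint (pre1 f) (pre0 f)}

/-- The underlying set of the graph `D̄♭(L)`. -/
abbrev SPHsub := {f : PMap L // f ∈ SPHset L}

/-- The relation `E` on `SPH(L, 2_B)`, giving the graph `D̄♭(L)`. -/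
def ES (f g : SPHsub L) : Prop := ErelP f.1 g.1

/-- The evaluation map `ē_a` on `SPH(L,2_B)`. -/
def evalS (a : L) : PMap (SPHsub L) := fun f => f.1 a

/-- `V_a = {f ∈ SPH(L,2_B) : f(a) = 0}`. -/
def VaS (a : L) : Set (SPHsub L) := {f | f.1 a = some false}

/-- `W_a = {f ∈ SPH(L,2_B) : f(a) = 1}`. -/
def WaS (a : L) : Set (SPHsub L) := {f | f.1 a = some true}

/-- The topology on `SPH(L,2_B)` with the sets `V_a`, `W_a` as a subbasis of
closed sets. -/
def tauS : TopologicalSpace (SPHsub L) :=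
  TopologicalSpace.generateFrom {U | ∃ a : L, U = (VaS L a)ᶜ ∨ U = (WaS L a)ᶜ}

/-- The carrier of the completion built from `D♭(L)`. -/
abbrev CX := {φ : PMap (MPHsub L) // φ ∈ MPE (EM L)}

/-- The carrier of the completion built from `D̄♭(L)`. -/
abbrev CY := {φ : PMap (SPHsub L) // φ ∈ MPE (ES L)}

end Lat

/-- `ℓ(A) = {f ∈ SPH(L,2_B) : f ≰₁ g for all g ∈ A}`. -/
def ellS (L : Type*) [Lattice L] [BoundedOrder L]
    (A : Set (SPHsub L)) : Set (SPHsub L) := {f | ∀ g ∈ A, ¬ le1 f.1 g.1}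

/-- `r(A) = {f ∈ SPH(L,2_B) : f ≰₂ g for all g ∈ A}`. -/
def rS (L : Type*) [Lattice L] [BoundedOrder L]
    (A : Set (SPHsub L)) : Set (SPHsub L) := {f | ∀ g ∈ A, ¬ le2 f.1 g.1}

/-!
A partial map `φ` into `2` is the pair of disjoint sets `U = φ⁻¹(1)`, `V = φ⁻¹(0)`, and it is
`E`-preserving iff there is no edge from `U` into `V`. For a reflexive graph, maximality then
says that `U` is exactly the set of points with no edge into `V`, and `V` the set of points
with no edge out of `U`: a point outside `U ∪ V` satisfying either condition could be added.
On `D̄♭(L)` an edge `f → g` means `f⁻¹(1) ∩ g⁻¹(0) = ∅`, in which case the pair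
`(f⁻¹(1), g⁻¹(0))` is itself an SPH `h`; with `f ≤₁ h` and `h ≤₂ g` this turns "no edge"
into the conditions `≰₁`, `≰₂` of `ℓ` and `r`, provided the sets involved only depend on
`f⁻¹(1)`, resp. `g⁻¹(0)`.
-/

section PartialMaps

variable {X : Type*} {E : X → X → Prop}

def noEdgeInto (E : X → X → Prop) (A : Set X) : Set X := {x | ∀ y ∈ A, ¬ E x y}

def noEdgeFrom (E : X → X → Prop) (A : Set X) : Set X := {y | ∀ x ∈ A, ¬ E x y}

lemma noEdgeInto_anti {A B : Set X} (h : A ⊆ B) : noEdgeInto E B ⊆ noEdgeInto E A :=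
  fun _ hx y hy => hx y (h hy)

lemma noEdgeFrom_anti {A B : Set X} (h : A ⊆ B) : noEdgeFrom E B ⊆ noEdgeFrom E A :=
  fun _ hx y hy => hx y (h hy)

lemma eq_of_pre1_eq_of_pre0_eq {φ ψ : PMap X} (h1 : pre1 φ = pre1 ψ) (h0 : pre0 φ = pre0 ψ) :
    φ = ψ := by
  funext x
  have h1x : φ x = some true ↔ ψ x = some true := Set.ext_iff.1 h1 x
  have h0x : φ x = some false ↔ ψ x = some false := Set.ext_iff.1 h0 x
  rcases hφ : φ x with _ | _ | _ <;> rcases hψ : ψ x with _ | _ | _ <;> simp_all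

lemma pExt_iff {φ ψ : PMap X} : PExt ψ φ ↔ pre1 φ ⊆ pre1 ψ ∧ pre0 φ ⊆ pre0 ψ := by
  refine ⟨fun h => ⟨fun x hx => h hx, fun x hx => h hx⟩, fun ⟨h1, h0⟩ x a hx => ?_⟩
  cases a
  exacts [h0 hx, h1 hx]

lemma ePres_iff_pre1_subset {φ : PMap X} : EPres E φ ↔ pre1 φ ⊆ noEdgeInto E (pre0 φ) := by
  refine ⟨fun h x hx y hy hxy => absurd (h hxy hx hy) (by decide), fun h x y hxy a b ha hb => ?_⟩
  cases a
  · exact Bool.false_le b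
  · cases b
    · exact absurd hxy (h ha y hb)
    · exact le_rfl

lemma ePres_iff_pre0_subset {φ : PMap X} : EPres E φ ↔ pre0 φ ⊆ noEdgeFrom E (pre1 φ) := by
  rw [ePres_iff_pre1_subset]
  exact ⟨fun h y hy x hx hxy => h hx y hy hxy, fun h x hx y hy hxy => h hy x hx hxy⟩

noncomputable def PMap.ofSets (U V : Set X) : PMap X :=
  fun x => if x ∈ U then some true else if x ∈ V then some false else none

lemma pre1_ofSets (U V : Set X) : pre1 (PMap.ofSets U V) = U := by
  ext x
  simp only [pre1, PMap.ofSets, Set.mem_ofPred_eq]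
  split_ifs <;> simp_all

lemma pre0_ofSets {U V : Set X} (hUV : Disjoint U V) :
    pre0 (PMap.ofSets U V) = V := by
  ext x
  simp only [pre0, PMap.ofSets, Set.mem_ofPred_eq]
  split_ifs with hU
  · simpa using Set.disjoint_left.1 hUV hU
  · simp_all
  · simp_all

lemma erelP_iff_disjoint {f g : PMap X} : ErelP f g ↔ Disjoint (pre1 f) (pre0 g) := by
  rw [Set.disjoint_left]
  refine ⟨fun h x (h1 : f x = _) (h0 : g x = _) => absurd (h h1 h0) (by decide),
    fun h x a b ha hb => ?_⟩
  cases a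
  · exact Bool.false_le b
  · cases b
    · exact absurd hb (h ha)
    · exact le_rfl

lemma mem_pre1_of_mem_noEdgeInto (hE : ∀ x, E x x) {φ : PMap X} (hφ : φ ∈ MPE E) {x : X}
    (hx : x ∈ noEdgeInto E (pre0 φ)) : x ∈ pre1 φ := by
  have hx0 : φ x ≠ some false := fun h => hx x h (hE x)
  set ψ := Function.update φ x (some true)
  have hext : PExt ψ φ := by
    intro y a hy
    by_cases hyx : y = x
    · subst hyx
      cases a
      · exact absurd hy hx0
      · simp [ψ]
    · simpa [ψ, hyx] using hy
  have hpres : EPres E ψ := by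
    rw [ePres_iff_pre1_subset]
    intro y hy z (hz : ψ z = some false)
    have hzx : z ≠ x := by rintro rfl; simp [ψ] at hz
    have hz' : z ∈ pre0 φ := by simpa [ψ, hzx, pre0] using hz
    by_cases hyx : y = x
    · exact hyx ▸ hx z hz'
    · exact ePres_iff_pre1_subset.1 hφ.1 (by simpa [ψ, hyx, pre1] using hy) z hz'
  have := congrFun (hφ.2 ψ hpres hext) x
  simpa [ψ, pre1] using this.symm

lemma mem_pre0_of_mem_noEdgeFrom (hE : ∀ x, E x x) {φ : PMap X} (hφ : φ ∈ MPE E) {y : X}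
    (hy : y ∈ noEdgeFrom E (pre1 φ)) : y ∈ pre0 φ := by
  have hy1 : φ y ≠ some true := fun h => hy y h (hE y)
  set ψ := Function.update φ y (some false)
  have hext : PExt ψ φ := by
    intro z a hz
    by_cases hzy : z = y
    · subst hzy
      cases a
      · simp [ψ]
      · exact absurd hz hy1
    · simpa [ψ, hzy] using hz
  have hpres : EPres E ψ := by
    rw [ePres_iff_pre0_subset]
    intro z hz x (hx : ψ x = some true)
    have hxy : x ≠ y := by rintro rfl; simp [ψ] at hx
    have hx' : x ∈ pre1 φ := by simpa [ψ, hxy, pre1] using hx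
    by_cases hzy : z = y
    · exact hzy ▸ hy x hx'
    · exact ePres_iff_pre0_subset.1 hφ.1 (by simpa [ψ, hzy, pre0] using hz) x hx'
  have := congrFun (hφ.2 ψ hpres hext) y
  simpa [ψ, pre0] using this.symm

theorem mem_MPE_iff (hE : ∀ x, E x x) {φ : PMap X} :
    φ ∈ MPE E ↔ pre1 φ = noEdgeInto E (pre0 φ) ∧ pre0 φ = noEdgeFrom E (pre1 φ) := by
  constructor
  · intro hφ
    exact ⟨(ePres_iff_pre1_subset.1 hφ.1).antisymm fun _ => mem_pre1_of_mem_noEdgeInto hE hφ,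
      (ePres_iff_pre0_subset.1 hφ.1).antisymm fun _ => mem_pre0_of_mem_noEdgeFrom hE hφ⟩
  · rintro ⟨h1, h0⟩
    refine ⟨ePres_iff_pre1_subset.2 h1.subset, fun ψ hψ hext => ?_⟩
    obtain ⟨hsub1, hsub0⟩ := pExt_iff.1 hext
    refine eq_of_pre1_eq_of_pre0_eq (hsub1.antisymm' ?_) (hsub0.antisymm' ?_)
    · calc pre1 ψ ⊆ noEdgeInto E (pre0 ψ) := ePres_iff_pre1_subset.1 hψ
        _ ⊆ noEdgeInto E (pre0 φ) := noEdgeInto_anti hsub0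
        _ = pre1 φ := h1.symm
    · calc pre0 ψ ⊆ noEdgeFrom E (pre1 ψ) := ePres_iff_pre0_subset.1 hψ
        _ ⊆ noEdgeFrom E (pre1 φ) := noEdgeFrom_anti hsub1
        _ = pre0 φ := h0.symm

end PartialMaps

section SPH

variable {L : Type*} [Lattice L]

lemma ES_refl (f : SPHsub L) : ES L f f := erelP_iff_disjoint.2 f.2.2.2

lemma ES_of_le1 {f g : SPHsub L} (h : le1 f.1 g.1) : ES L f g :=
  erelP_iff_disjoint.2 (g.2.2.2.mono_left h)

lemma ES_of_le2 {f g : SPHsub L} (h : le2 g.1 f.1) : ES L f g :=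
  erelP_iff_disjoint.2 (f.2.2.2.mono_right h)

lemma exists_SPH_of_ES {f g : SPHsub L} (hfg : ES L f g) :
    ∃ h : SPHsub L, pre1 h.1 = pre1 f.1 ∧ pre0 h.1 = pre0 g.1 := by
  have hd : Disjoint (pre1 f.1) (pre0 g.1) := erelP_iff_disjoint.1 hfg
  have h1 := pre1_ofSets (pre1 f.1) (pre0 g.1)
  have h0 := pre0_ofSets hd
  refine ⟨⟨PMap.ofSets (pre1 f.1) (pre0 g.1), ?_⟩, h1, h0⟩
  show IsLatFilter L _ ∧ IsLatIdeal L _ ∧ Disjoint _ _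
  rw [h1, h0]
  exact ⟨f.2.1, g.2.2.1, hd⟩

def SaturatedPre1 (A : Set (SPHsub L)) : Prop :=
  ∀ ⦃f g : SPHsub L⦄, pre1 f.1 = pre1 g.1 → f ∈ A → g ∈ A

def SaturatedPre0 (A : Set (SPHsub L)) : Prop :=
  ∀ ⦃f g : SPHsub L⦄, pre0 f.1 = pre0 g.1 → f ∈ A → g ∈ A

lemma saturatedPre1_noEdgeInto (A : Set (SPHsub L)) : SaturatedPre1 (noEdgeInto (ES L) A) :=
  fun f g hfg hf h hA hgh => hf h hA (by rwa [ES, erelP_iff_disjoint, hfg, ← erelP_iff_disjoint])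

lemma saturatedPre0_noEdgeFrom (A : Set (SPHsub L)) : SaturatedPre0 (noEdgeFrom (ES L) A) :=
  fun f g hfg hf h hA hhg => hf h hA (by rwa [ES, erelP_iff_disjoint, hfg, ← erelP_iff_disjoint])

section Bounded

variable [BoundedOrder L]

lemma saturatedPre1_ellS (A : Set (SPHsub L)) : SaturatedPre1 (ellS L A) :=
  fun f g hfg hf h hA hle => hf h hA (by rwa [le1, hfg])

lemma saturatedPre0_rS (A : Set (SPHsub L)) : SaturatedPre0 (rS L A) :=
  fun f g hfg hf h hA hle => hf h hA (by rwa [le2, hfg])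

lemma ellS_eq_noEdgeInto {A : Set (SPHsub L)} (hA : SaturatedPre0 A) :
    ellS L A = noEdgeInto (ES L) A := by
  ext f
  refine ⟨fun hf g hg hfg => ?_, fun hf g hg hle => hf g hg (ES_of_le1 hle)⟩
  obtain ⟨h, h1, h0⟩ := exists_SPH_of_ES hfg
  exact hf h (hA h0.symm hg) (by rw [le1, h1])

lemma rS_eq_noEdgeFrom {A : Set (SPHsub L)} (hA : SaturatedPre1 A) :
    rS L A = noEdgeFrom (ES L) A := by
  ext g
  refine ⟨fun hg f hf hfg => ?_, fun hg f hf hle => hg f hf (ES_of_le2 hle)⟩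
  obtain ⟨h, h1, h0⟩ := exists_SPH_of_ES hfg
  exact hg h (hA h1.symm hf) (by rw [le2, h0])

end Bounded

end SPH

/-- Let `L` be a bounded lattice, `Y = D̄♭(L)` and `φ` a
partial map from `SPH(L,2_B)` to `{0,1}`. Then `φ ∈ MPE(Y,2)` if and only if
`φ⁻¹(1) = ℓ(φ⁻¹(0))` and `φ⁻¹(0) = r(φ⁻¹(1))`. -/
theorem stmt_18 (L : Type*) [Lattice L] [BoundedOrder L] (φ : PMap (SPHsub L)) :
    φ ∈ MPE (ES L) ↔
      (pre1 φ = ellS L (pre0 φ) ∧ pre0 φ = rS L (pre1 φ)) := by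
  rw [mem_MPE_iff ES_refl]
  constructor
  · rintro ⟨h1, h0⟩
    have hsat0 : SaturatedPre0 (pre0 φ) := h0 ▸ saturatedPre0_noEdgeFrom _
    have hsat1 : SaturatedPre1 (pre1 φ) := h1 ▸ saturatedPre1_noEdgeInto _
    rw [ellS_eq_noEdgeInto hsat0, rS_eq_noEdgeFrom hsat1]
    exact ⟨h1, h0⟩
  · rintro ⟨h1, h0⟩
    have hsat0 : SaturatedPre0 (pre0 φ) := h0 ▸ saturatedPre0_rS _
    have hsat1 : SaturatedPre1 (pre1 φ) := h1 ▸ saturatedPre1_ellS _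
    rw [← ellS_eq_noEdgeInto hsat0, ← rS_eq_noEdgeFrom hsat1]
    exact ⟨h1, h0⟩

end CanExt
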